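/- With m = ⌊π/(4 arcsin √ρ)⌋ Grover iterations, the probability sin²((2m+1)θ) of measuring the good state (where sin θ = √ρ, θ ∈ (0, π/2]) is at least max(1−ρ, ρ). -/
import Mathlib


/-- With `m = ⌊π/(4 arcsin √ρ)⌋` Grover iterations, the success probability
`sin²((2m+1)θ)` (where `sin θ = √ρ`, `θ ∈ (0, π/2]`) is at least
`max(1−ρ, ρ)`. -/
theorem grover_success_probability (ρ θ : ℝ) (hρ : 0 < ρ) (hρ1 : ρ ≤ 1)
    (hθ : θ ∈ Set.Ioc 0 (Real.pi / 2)) (hsin : Real.sin θ = Real.sqrt ρ) :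
    max (1 - ρ) ρ ≤
      Real.sin ((2 * ⌊Real.pi / (4 * Real.arcsin (Real.sqrt ρ))⌋₊ + 1) * θ) ^ 2 := by
  obtain ⟨hθ0, hθ2⟩ := hθ
  have hpi := Real.pi_pos
  have harc : Real.arcsin (Real.sqrt ρ) = θ := by
    rw [← hsin, Real.arcsin_sin (by linarith [Real.pi_pos]) hθ2]
  rw [harc]
  have hsin2 : Real.sin θ ^ 2 = ρ := by
    rw [hsin, Real.sq_sqrt hρ.le]
  set m : ℕ := ⌊Real.pi / (4 * θ)⌋₊ with hm
  rcases le_or_gt θ (Real.pi / 4) with hc | hc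
  · -- θ ≤ π/4
    have hx4 : (0:ℝ) < 4 * θ := by linarith
    have hub : (m : ℝ) ≤ Real.pi / (4 * θ) := Nat.floor_le (by positivity)
    have hlb : Real.pi / (4 * θ) < m + 1 := Nat.lt_floor_add_one _
    set x : ℝ := (2 * m + 1) * θ with hxdef
    have hub' : x ≤ Real.pi / 2 + θ := by
      have : (m : ℝ) * (4 * θ) ≤ Real.pi := (le_div_iff₀ hx4).mp hub
      rw [hxdef]; nlinarith
    have hlb' : Real.pi / 2 - θ ≤ x := by
      have : Real.pi < ((m : ℝ) + 1) * (4 * θ) := (div_lt_iff₀ hx4).mp hlb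
      rw [hxdef]; nlinarith
    have habs : |Real.pi / 2 - x| ≤ θ := by
      rw [abs_le]; constructor <;> linarith
    have hkey : Real.cos θ ≤ Real.sin x := by
      have h1 : Real.cos θ ≤ Real.cos |Real.pi / 2 - x| := by
        apply Real.cos_le_cos_of_nonneg_of_le_pi (abs_nonneg _) (by linarith)
        exact habs
      rwa [Real.cos_abs, Real.cos_pi_div_two_sub] at h1
    have hcos0 : 0 ≤ Real.cos θ := Real.cos_nonneg_of_mem_Icc ⟨by linarith, hθ2⟩
    have hsq : Real.cos θ ^ 2 ≤ Real.sin x ^ 2 := by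
      nlinarith
    have hcos2 : Real.cos θ ^ 2 = 1 - ρ := by
      have := Real.sin_sq_add_cos_sq θ
      nlinarith
    have hρhalf : ρ ≤ 1 - ρ := by
      have h2 : Real.sin θ ≤ Real.sin (Real.pi / 4) := by
        apply Real.sin_le_sin_of_le_of_le_pi_div_two (by linarith) (by linarith) hc
      have h4 : Real.sin (Real.pi / 4) = Real.sqrt 2 / 2 := Real.sin_pi_div_four
      have h5 : Real.sqrt 2 ^ 2 = 2 := Real.sq_sqrt (by norm_num)
      have h6 : 0 ≤ Real.sin θ := by rw [hsin]; positivity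
      nlinarith
    rw [max_le_iff]
    constructor <;> [skip; linarith [hsq, hcos2]]
    linarith [hsq, hcos2]
  · -- θ > π/4 : m = 0
    have hm0 : m = 0 := by
      rw [hm, Nat.floor_eq_zero]
      rw [div_lt_one (by linarith)]
      linarith
    rw [hm0]
    push_cast
    ring_nf
    have hρhalf : 1 - ρ ≤ ρ := by
      have h2 : Real.sin (Real.pi / 4) ≤ Real.sin θ := by
        apply Real.sin_le_sin_of_le_of_le_pi_div_two (by linarith) hθ2 hc.le
      have h4 : Real.sin (Real.pi / 4) = Real.sqrt 2 / 2 := Real.sin_pi_div_four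
      have h5 : Real.sqrt 2 ^ 2 = 2 := Real.sq_sqrt (by norm_num)
      nlinarith [hsin2, Real.sqrt_nonneg 2]
    have : max (1 - ρ) ρ = ρ := max_eq_right hρhalf
    rw [this]
    calc ρ = Real.sin θ ^ 2 := hsin2.symm
    _ ≤ _ := by ring_nf; exact le_refl _
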